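/- arXiv:2210.04649 — 2 statements merged into one kernel-verified Lean document; each statement's English description precedes it below -/
import Mathlib

section
/- For every positive integer k, the graph XI_{2k+1} satisfies χ'_irr(XI_{2k+1}) = 3, i.e., it admits a locally irregular edge-coloring using 3 colors but none using at most 2 colors. -/
/-- A graph is *locally irregular* if no two adjacent vertices have the same degree. -/
def LocallyIrregular {V : Type*} (G : SimpleGraph V) : Prop :=
  ∀ ⦃u v : V⦄, G.Adj u v → (G.neighborSet u).ncard ≠ (G.neighborSet v).ncard

/-- `HasLIEC G k` : `G` admits a locally irregular edge-coloring using at most `k` colors,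
i.e. an assignment of one of `k` colors to every edge such that the edges of each fixed
color induce a locally irregular graph. -/
def HasLIEC {V : Type*} (G : SimpleGraph V) (k : ℕ) : Prop :=
  ∃ c : Sym2 V → Fin k, ∀ i : Fin k,
    LocallyIrregular (SimpleGraph.fromEdgeSet {e | e ∈ G.edgeSet ∧ c e = i})

/-- The graph `XI n` : two disjoint cycles of length `3n` (the `inl` vertices `v_a` and the
`inr` vertices `u_a`, `a ∈ ZMod (3n)`), together with the edges `v_{3i} u_{3i+1}`,
`v_{3i+1} u_{3i}` and `v_{3i+2} u_{3i+2}` for all multiples `3i` modulo `3n`. -/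
def XI (n : ℕ) : SimpleGraph (ZMod (3 * n) ⊕ ZMod (3 * n)) :=
  SimpleGraph.fromRel (fun x y =>
    match x, y with
    | Sum.inl a, Sum.inl b => a - b = 1
    | Sum.inr a, Sum.inr b => a - b = 1
    | Sum.inl a, Sum.inr b =>
        ∃ i : ZMod (3 * n),
          (a = 3 * i ∧ b = 3 * i + 1) ∨ (a = 3 * i + 1 ∧ b = 3 * i) ∨
            (a = 3 * i + 2 ∧ b = 3 * i + 2)
    | Sum.inr _, Sum.inl _ => False)

/-!
There is a 3-colouring of period 3 along the cycles in which two colour classes are families of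
disjoint cherries and the third is a small tree on each block of six vertices; by periodicity its
local irregularity is a check on residues mod 3.

A 2-colouring of a cubic graph is locally irregular iff its red degree is a proper vertex
colouring. Cut `XI n` at its `n` rungs `v_{3i+2} u_{3i+2}` and record, at each rung, the colours
of the rung and of the four cycle edges at its ends. The colouring of the block between two
consecutive rungs is then a step of a transfer relation on these 32 states, and a finite check
exhibits a potential that never increases along a step and a side that flips whenever the
potential stays. The states met around `XI n` form a closed walk of length `n`, so `n` is even.
-/

lemma Set.ncard_sep_triple {α : Type*} {y₁ y₂ y₃ : α} (h₁₂ : y₁ ≠ y₂) (h₁₃ : y₁ ≠ y₃)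
    (h₂₃ : y₂ ≠ y₃) (p : α → Bool) :
    {y ∈ ({y₁, y₂, y₃} : Set α) | p y}.ncard = (p y₁).toNat + (p y₂).toNat + (p y₃).toNat := by
  classical
  have hset : {y ∈ ({y₁, y₂, y₃} : Set α) | p y} = ↑(({y₁, y₂, y₃} : Finset α).filter (p ·)) := by
    ext y
    simp
  rw [hset, Set.ncard_coe_finset, Finset.card_filter, Finset.sum_insert (by simp [h₁₂, h₁₃]),
    Finset.sum_insert (by simp [h₂₃]), Finset.sum_singleton, add_assoc]
  cases p y₁ <;> cases p y₂ <;> cases p y₃ <;> rfl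

namespace SimpleGraph

variable {V α : Type*} (G : SimpleGraph V)

def colorClass (c : Sym2 V → α) (i : α) : SimpleGraph V :=
  fromEdgeSet {e | e ∈ G.edgeSet ∧ c e = i}

variable {G}

lemma colorClass_neighborSet (c : Sym2 V → α) (i : α) (x : V) :
    (G.colorClass c i).neighborSet x = {y ∈ G.neighborSet x | c s(x, y) = i} := by
  ext y
  simp only [colorClass, mem_neighborSet, fromEdgeSet_adj, Set.mem_ofPred_eq, mem_edgeSet]
  exact ⟨fun ⟨h, _⟩ => h, fun h => ⟨h, h.1.ne⟩⟩

lemma hasLIEC_iff {k : ℕ} :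
    HasLIEC G k ↔ ∃ c : Sym2 V → Fin k, ∀ i, LocallyIrregular (G.colorClass c i) :=
  Iff.rfl

lemma locallyIrregular_colorClass_iff {c : Sym2 V → α} {i : α} :
    LocallyIrregular (G.colorClass c i) ↔ ∀ u v, G.Adj u v → c s(u, v) = i →
      ((G.colorClass c i).neighborSet u).ncard ≠ ((G.colorClass c i).neighborSet v).ncard := by
  simp only [LocallyIrregular, ← mem_neighborSet, colorClass_neighborSet]
  exact ⟨fun h u v huv hc => h ⟨huv, hc⟩, fun h u v ⟨huv, hc⟩ => h u v huv hc⟩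

lemma ncard_colorClass_zero_add_one {c : Sym2 V → Fin 2} {x : V}
    (hx : (G.neighborSet x).Finite) :
    ((G.colorClass c 0).neighborSet x).ncard + ((G.colorClass c 1).neighborSet x).ncard =
      (G.neighborSet x).ncard := by
  have hone : {y ∈ G.neighborSet x | c s(x, y) = 1} =
      G.neighborSet x \ {y | c s(x, y) = 0} := by
    ext y
    simp only [Set.mem_sdiff, Set.mem_ofPred_eq]
    rw [(by decide : ∀ j : Fin 2, j = 1 ↔ ¬j = 0)]
  rw [colorClass_neighborSet, colorClass_neighborSet, hone]
  exact Set.ncard_inter_add_ncard_sdiff_eq_ncard _ _ hx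

lemma ncard_colorClass_zero_ne_of_adj {c : Sym2 V → Fin 2}
    (hc : ∀ i, LocallyIrregular (G.colorClass c i)) {d : ℕ}
    (hfin : ∀ v, (G.neighborSet v).Finite) (hdeg : ∀ v, (G.neighborSet v).ncard = d)
    {x y : V} (hxy : G.Adj x y) :
    ((G.colorClass c 0).neighborSet x).ncard ≠ ((G.colorClass c 0).neighborSet y).ncard := by
  have hadj : (G.colorClass c (c s(x, y))).Adj x y := by
    rw [← mem_neighborSet, colorClass_neighborSet]
    exact ⟨hxy, rfl⟩
  have hx := ncard_colorClass_zero_add_one (c := c) (hfin x)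
  have hy := ncard_colorClass_zero_add_one (c := c) (hfin y)
  have hirr := hc _ hadj
  rcases (by decide : ∀ j : Fin 2, j = 0 ∨ j = 1) (c s(x, y)) with h | h <;> rw [h] at hirr
  · exact hirr
  · rw [hdeg] at hx hy
    omega

lemma ncard_colorClass_neighborSet_of_eq_triple [DecidableEq α] {x y₁ y₂ y₃ : V}
    (hN : G.neighborSet x = {y₁, y₂, y₃}) (h₁₂ : y₁ ≠ y₂) (h₁₃ : y₁ ≠ y₃) (h₂₃ : y₂ ≠ y₃)
    (c : Sym2 V → α) (i : α) :
    ((G.colorClass c i).neighborSet x).ncard =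
      (decide (c s(x, y₁) = i)).toNat + (decide (c s(x, y₂) = i)).toNat +
        (decide (c s(x, y₃) = i)).toNat := by
  have := Set.ncard_sep_triple h₁₂ h₁₃ h₂₃ (fun y => decide (c s(x, y) = i))
  simp only [decide_eq_true_eq] at this
  rw [colorClass_neighborSet, hN, this]

end SimpleGraph

theorem even_of_periodic_of_potential {α : Type*} {T : α → α → Prop} (rank : α → ℕ)
    (side : α → Bool) (hT : ∀ ⦃s t⦄, T s t → rank t ≤ rank s ∧ (rank t = rank s → side t ≠ side s))
    {s : ℕ → α} (hs : ∀ j, T (s j) (s (j + 1))) {n : ℕ} (hn : s n = s 0) : Even n := by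
  have hanti : Antitone (rank ∘ s) := antitone_nat_of_succ_le fun j => (hT (hs j)).1
  have hrank : ∀ j ≤ n, rank (s j) = rank (s 0) := fun j hj =>
    le_antisymm (hanti j.zero_le) (by simpa [hn] using hanti hj)
  have hside : ∀ j ≤ n, side (s j) = (side (s 0) ^^ j.bodd) := by
    intro j hj
    induction j with
    | zero => simp
    | succ j ih =>
      have hflip := (hT (hs j)).2 ((hrank (j + 1) hj).trans (hrank j (by omega)).symm)
      rw [Nat.bodd_succ, Bool.xor_not, ← ih (by omega)]
      exact Bool.eq_not_of_ne hflip
  have hodd := hside n le_rfl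
  rw [hn] at hodd
  rw [Nat.even_iff, Nat.mod_two_of_bodd]
  revert hodd
  cases side (s 0) <;> cases n.bodd <;> decide

namespace XI

open Sum

variable {n : ℕ}

def residue (n : ℕ) : ZMod (3 * n) →+* ZMod 3 := ZMod.castHom (dvd_mul_right 3 n) _

lemma residue_three_mul (i : ZMod (3 * n)) : residue n (3 * i) = 0 := by
  rw [map_mul, map_ofNat]
  exact zero_mul _

lemma exists_eq_three_mul_of_residue_eq_zero {a : ZMod (3 * n)} (h : residue n a = 0) :
    ∃ i, a = 3 * i := by
  rw [← ZMod.intCast_zmod_cast a, map_intCast, ZMod.intCast_zmod_eq_zero_iff_dvd] at h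
  obtain ⟨q, hq⟩ := h
  exact ⟨q, by rw [← ZMod.intCast_zmod_cast a, hq]; push_cast; rfl⟩

lemma two_ne_zero_zmod : (2 : ZMod (3 * n)) ≠ 0 := by
  intro h
  have hdvd := (ZMod.natCast_eq_zero_iff 2 (3 * n)).mp (by exact_mod_cast h)
  have := Nat.le_of_dvd two_pos hdvd
  obtain rfl : n = 0 := by omega
  exact absurd (Nat.eq_zero_of_zero_dvd hdvd) (by norm_num)

lemma one_ne_zero_zmod : (1 : ZMod (3 * n)) ≠ 0 := fun h =>
  two_ne_zero_zmod (by rw [← one_add_one_eq_two, h, add_zero])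

def partner (a : ZMod (3 * n)) : ZMod (3 * n) :=
  if residue n a = 0 then a + 1 else if residue n a = 1 then a - 1 else a

lemma residue_cases (a : ZMod (3 * n)) :
    residue n a = 0 ∨ residue n a = 1 ∨ residue n a = 2 :=
  (by decide : ∀ t : ZMod 3, t = 0 ∨ t = 1 ∨ t = 2) _

lemma partner_of_residue_eq_zero {a : ZMod (3 * n)} (h : residue n a = 0) :
    partner a = a + 1 := by
  simp [partner, h]

lemma partner_of_residue_eq_one {a : ZMod (3 * n)} (h : residue n a = 1) :
    partner a = a - 1 := by
  simp [partner, h]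

lemma partner_of_residue_eq_two {a : ZMod (3 * n)} (h : residue n a = 2) : partner a = a := by
  simp [partner, h, (by decide : (2 : ZMod 3) ≠ 0), (by decide : (2 : ZMod 3) ≠ 1)]

lemma partner_partner (a : ZMod (3 * n)) : partner (partner a) = a := by
  rcases residue_cases a with h | h | h
  · rw [partner_of_residue_eq_zero h, partner_of_residue_eq_one (by simp [h]), add_sub_cancel_right]
  · rw [partner_of_residue_eq_one h, partner_of_residue_eq_zero (by simp [h]), sub_add_cancel]
  · rw [partner_of_residue_eq_two h, partner_of_residue_eq_two h]

lemma crossRel_iff_eq_partner {a b : ZMod (3 * n)} :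
    (∃ i : ZMod (3 * n), (a = 3 * i ∧ b = 3 * i + 1) ∨ (a = 3 * i + 1 ∧ b = 3 * i) ∨
      (a = 3 * i + 2 ∧ b = 3 * i + 2)) ↔ b = partner a := by
  constructor
  · rintro ⟨i, ⟨rfl, rfl⟩ | ⟨rfl, rfl⟩ | ⟨rfl, rfl⟩⟩
    · rw [partner_of_residue_eq_zero (residue_three_mul i)]
    · rw [partner_of_residue_eq_one (by simp [residue_three_mul]), add_sub_cancel_right]
    · rw [partner_of_residue_eq_two (by simp [residue_three_mul, map_ofNat])]
  · rintro rfl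
    rcases residue_cases a with h | h | h
    · obtain ⟨i, rfl⟩ := exists_eq_three_mul_of_residue_eq_zero h
      exact ⟨i, .inl ⟨rfl, partner_of_residue_eq_zero h⟩⟩
    · obtain ⟨i, hi⟩ := exists_eq_three_mul_of_residue_eq_zero (a := a - 1) (by simp [h])
      refine ⟨i, .inr (.inl ⟨by rw [← hi, sub_add_cancel], ?_⟩)⟩
      rw [partner_of_residue_eq_one h, hi]
    · obtain ⟨i, hi⟩ := exists_eq_three_mul_of_residue_eq_zero (a := a - 2) (by simp [h, map_ofNat])
      have ha : a = 3 * i + 2 := by rw [← hi, sub_add_cancel]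
      exact ⟨i, .inr (.inr ⟨ha, by rw [partner_of_residue_eq_two h, ha]⟩)⟩

lemma cycle_adj_iff {a b : ZMod (3 * n)} :
    (a ≠ b ∧ (a - b = 1 ∨ b - a = 1)) ↔ b = a + 1 ∨ b = a - 1 := by
  constructor
  · rintro ⟨-, h | h⟩
    · exact .inr (by rw [← h, sub_sub_cancel])
    · exact .inl (by rw [← h, add_sub_cancel])
  · rintro (rfl | rfl)
    · exact ⟨fun h => one_ne_zero_zmod (by linear_combination -h), .inr (add_sub_cancel_left a 1)⟩
    · exact ⟨fun h => one_ne_zero_zmod (by linear_combination h), .inl (sub_sub_cancel a 1)⟩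

lemma adj_inl_inl {a b : ZMod (3 * n)} : (XI n).Adj (inl a) (inl b) ↔ b = a + 1 ∨ b = a - 1 := by
  rw [XI, SimpleGraph.fromRel_adj, ne_eq, inl.injEq]
  exact cycle_adj_iff

lemma adj_inr_inr {a b : ZMod (3 * n)} : (XI n).Adj (inr a) (inr b) ↔ b = a + 1 ∨ b = a - 1 := by
  rw [XI, SimpleGraph.fromRel_adj, ne_eq, inr.injEq]
  exact cycle_adj_iff

lemma adj_inl_inr {a b : ZMod (3 * n)} : (XI n).Adj (inl a) (inr b) ↔ b = partner a := by
  rw [XI, SimpleGraph.fromRel_adj, ← crossRel_iff_eq_partner]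
  simp

lemma adj_inr_inl {a b : ZMod (3 * n)} : (XI n).Adj (inr a) (inl b) ↔ b = partner a := by
  rw [SimpleGraph.adj_comm, adj_inl_inr]
  exact ⟨fun h => by rw [h, partner_partner], fun h => by rw [h, partner_partner]⟩

lemma neighborSet_inl (a : ZMod (3 * n)) :
    (XI n).neighborSet (inl a) = {inl (a - 1), inr (partner a), inl (a + 1)} := by
  ext (b | b) <;> simp [adj_inl_inl, adj_inl_inr, or_comm]

lemma neighborSet_inr (a : ZMod (3 * n)) :
    (XI n).neighborSet (inr a) = {inr (a - 1), inl (partner a), inr (a + 1)} := by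
  ext (b | b) <;> simp [adj_inr_inr, adj_inr_inl, or_comm]

lemma sub_one_ne_add_one (a : ZMod (3 * n)) : a - 1 ≠ a + 1 := fun h =>
  two_ne_zero_zmod (by linear_combination -h)

lemma finite_neighborSet (v : ZMod (3 * n) ⊕ ZMod (3 * n)) : ((XI n).neighborSet v).Finite := by
  rcases v with a | a
  · rw [neighborSet_inl]; exact Set.toFinite _
  · rw [neighborSet_inr]; exact Set.toFinite _

lemma ncard_neighborSet (v : ZMod (3 * n) ⊕ ZMod (3 * n)) : ((XI n).neighborSet v).ncard = 3 := by
  rcases v with a | a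
  · rw [neighborSet_inl, Set.ncard_eq_three]
    exact ⟨_, _, _, by simp, by simp [sub_one_ne_add_one], by simp, rfl⟩
  · rw [neighborSet_inr, Set.ncard_eq_three]
    exact ⟨_, _, _, by simp, by simp [sub_one_ne_add_one], by simp, rfl⟩

def vEdge (a : ZMod (3 * n)) : Sym2 (ZMod (3 * n) ⊕ ZMod (3 * n)) := s(inl a, inl (a + 1))

def uEdge (a : ZMod (3 * n)) : Sym2 (ZMod (3 * n) ⊕ ZMod (3 * n)) := s(inr a, inr (a + 1))

def crossEdge (a : ZMod (3 * n)) : Sym2 (ZMod (3 * n) ⊕ ZMod (3 * n)) := s(inl a, inr (partner a))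

variable {α : Type*} [DecidableEq α]

lemma ncard_colorClass_neighborSet_inl (c : Sym2 (ZMod (3 * n) ⊕ ZMod (3 * n)) → α) (i : α)
    (a : ZMod (3 * n)) :
    (((XI n).colorClass c i).neighborSet (inl a)).ncard =
      (decide (c (vEdge (a - 1)) = i)).toNat + (decide (c (crossEdge a) = i)).toNat +
        (decide (c (vEdge a) = i)).toNat := by
  rw [SimpleGraph.ncard_colorClass_neighborSet_of_eq_triple (neighborSet_inl a) (by simp)
    (by simp [sub_one_ne_add_one]) (by simp), vEdge, vEdge, sub_add_cancel, Sym2.eq_swap]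
  rfl

lemma ncard_colorClass_neighborSet_inr (c : Sym2 (ZMod (3 * n) ⊕ ZMod (3 * n)) → α) (i : α)
    (a : ZMod (3 * n)) :
    (((XI n).colorClass c i).neighborSet (inr a)).ncard =
      (decide (c (uEdge (a - 1)) = i)).toNat + (decide (c (crossEdge (partner a)) = i)).toNat +
        (decide (c (uEdge a) = i)).toNat := by
  rw [SimpleGraph.ncard_colorClass_neighborSet_of_eq_triple (neighborSet_inr a) (by simp)
    (by simp [sub_one_ne_add_one]) (by simp), uEdge, uEdge, crossEdge, partner_partner,
    sub_add_cancel, Sym2.eq_swap (a := inr (a - 1)), Sym2.eq_swap (a := inl (partner a))]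

lemma residue_partner (a : ZMod (3 * n)) : residue n (partner a) = 1 - residue n a := by
  rcases residue_cases a with h | h | h
  · rw [partner_of_residue_eq_zero h, map_add, map_one, h]; decide
  · rw [partner_of_residue_eq_one h, map_sub, map_one, h]
  · rw [partner_of_residue_eq_two h, h]; decide

lemma forall_adj {P : ZMod (3 * n) ⊕ ZMod (3 * n) → ZMod (3 * n) ⊕ ZMod (3 * n) → Prop}
    (hP : ∀ u v, P u v → P v u) (hl : ∀ a, P (inl a) (inl (a + 1)))
    (hr : ∀ a, P (inr a) (inr (a + 1))) (hlr : ∀ a, P (inl a) (inr (partner a))) :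
    ∀ u v, (XI n).Adj u v → P u v := by
  rintro (a | a) (b | b) h
  · rcases adj_inl_inl.mp h with rfl | rfl
    · exact hl a
    · simpa using hP _ _ (hl (a - 1))
  · rw [adj_inl_inr.mp h]; exact hlr a
  · rw [adj_inr_inl.mp h]; exact hP _ _ (by simpa [partner_partner] using hlr (partner a))
  · rcases adj_inr_inr.mp h with rfl | rfl
    · exact hr a
    · simpa using hP _ _ (hr (a - 1))

def cycleColorV (s : ZMod 3) : Fin 3 := if s = 2 then 1 else 0

def cycleColorU (s : ZMod 3) : Fin 3 := if s = 1 then 0 else 2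

def crossColor (t : ZMod 3) : Fin 3 := if t = 0 then 1 else 0

/-- Colour `1` consists of the cherries `v_{3i-1} v_{3i} u_{3i+1}`, colour `2` of the cherries
`u_{3i+1} u_{3i+2} u_{3i+3}`, and colour `0` of one tree on each block `{v_j, u_j : 3i ≤ j ≤ 3i+2}`.
A cycle edge is coloured according to the sum of the residues of its ends, a cross edge according
to the residue of its end on the first cycle. -/
def threeColoringFun : ZMod (3 * n) ⊕ ZMod (3 * n) → ZMod (3 * n) ⊕ ZMod (3 * n) → Fin 3
  | inl a, inl b => cycleColorV (residue n a + residue n b)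
  | inr a, inr b => cycleColorU (residue n a + residue n b)
  | inl a, inr _ => crossColor (residue n a)
  | inr _, inl b => crossColor (residue n b)

def threeColoring (n : ℕ) : Sym2 (ZMod (3 * n) ⊕ ZMod (3 * n)) → Fin 3 :=
  Sym2.lift ⟨threeColoringFun, fun
    | inl _, inl _ => by simp only [threeColoringFun, add_comm]
    | inr _, inr _ => by simp only [threeColoringFun, add_comm]
    | inl _, inr _ => rfl
    | inr _, inl _ => rfl⟩

lemma threeColoring_vEdge (a : ZMod (3 * n)) :
    threeColoring n (vEdge a) = cycleColorV (residue n a + residue n (a + 1)) := rfl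

lemma threeColoring_uEdge (a : ZMod (3 * n)) :
    threeColoring n (uEdge a) = cycleColorU (residue n a + residue n (a + 1)) := rfl

lemma threeColoring_crossEdge (a : ZMod (3 * n)) :
    threeColoring n (crossEdge a) = crossColor (residue n a) := rfl

def threeColoringDegV (i : Fin 3) (t : ZMod 3) : ℕ :=
  (decide (cycleColorV (t - 1 + t) = i)).toNat + (decide (crossColor t = i)).toNat +
    (decide (cycleColorV (t + (t + 1)) = i)).toNat

def threeColoringDegU (i : Fin 3) (t : ZMod 3) : ℕ :=
  (decide (cycleColorU (t - 1 + t) = i)).toNat + (decide (crossColor (1 - t) = i)).toNat +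
    (decide (cycleColorU (t + (t + 1)) = i)).toNat

lemma ncard_threeColoring_inl (i : Fin 3) (a : ZMod (3 * n)) :
    (((XI n).colorClass (threeColoring n) i).neighborSet (inl a)).ncard =
      threeColoringDegV i (residue n a) := by
  rw [ncard_colorClass_neighborSet_inl, threeColoring_vEdge, threeColoring_crossEdge,
    threeColoring_vEdge, sub_add_cancel, map_sub, map_add, map_one]
  rfl

lemma ncard_threeColoring_inr (i : Fin 3) (a : ZMod (3 * n)) :
    (((XI n).colorClass (threeColoring n) i).neighborSet (inr a)).ncard =
      threeColoringDegU i (residue n a) := by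
  rw [ncard_colorClass_neighborSet_inr, threeColoring_uEdge, threeColoring_crossEdge,
    threeColoring_uEdge, sub_add_cancel, map_sub, map_add, map_one, residue_partner]
  rfl

lemma threeColoring_degrees_ne : ∀ (t : ZMod 3) (i : Fin 3),
    (cycleColorV (t + (t + 1)) = i → threeColoringDegV i t ≠ threeColoringDegV i (t + 1)) ∧
    (cycleColorU (t + (t + 1)) = i → threeColoringDegU i t ≠ threeColoringDegU i (t + 1)) ∧
    (crossColor t = i → threeColoringDegV i t ≠ threeColoringDegU i (1 - t)) := by
  decide

theorem hasLIEC_three (n : ℕ) : HasLIEC (XI n) 3 := by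
  refine SimpleGraph.hasLIEC_iff.mpr ⟨threeColoring n, fun i => ?_⟩
  rw [SimpleGraph.locallyIrregular_colorClass_iff]
  refine forall_adj (fun u v h hc => (h (by rwa [Sym2.eq_swap])).symm) (fun a => ?_) (fun a => ?_)
    (fun a => ?_)
  · change threeColoring n (vEdge a) = i → _
    rw [threeColoring_vEdge, ncard_threeColoring_inl, ncard_threeColoring_inl, map_add, map_one]
    exact (threeColoring_degrees_ne _ i).1
  · change threeColoring n (uEdge a) = i → _
    rw [threeColoring_uEdge, ncard_threeColoring_inr, ncard_threeColoring_inr, map_add, map_one]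
    exact (threeColoring_degrees_ne _ i).2.1
  · change threeColoring n (crossEdge a) = i → _
    rw [threeColoring_crossEdge, ncard_threeColoring_inl, ncard_threeColoring_inr, residue_partner]
    exact (threeColoring_degrees_ne _ i).2.2

/-- The colours (`true` for colour `0`) of the edges at a rung `v_{a+1} u_{a+1}`: the rung, the
cycle edges `v_a v_{a+1}`, `u_a u_{a+1}` entering it and `v_{a+1} v_{a+2}`, `u_{a+1} u_{a+2}`
leaving it. -/
structure RungState where
  inV : Bool
  inU : Bool
  rung : Bool
  outV : Bool
  outU : Bool

namespace RungState

def degV (s : RungState) : ℕ := s.inV.toNat + s.rung.toNat + s.outV.toNat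

def degU (s : RungState) : ℕ := s.inU.toNat + s.rung.toNat + s.outU.toNat

/-- `vv`, `uu`, `vu`, `uv` are the colours of `v_{a+2} v_{a+3}`, `u_{a+2} u_{a+3}`,
`v_{a+2} u_{a+3}`, `v_{a+3} u_{a+2}`, the square between the rungs at `a + 1` and `a + 4`; the
conditions say that the degree in colour `0` is proper on the ten edges meeting the square or
one of the two rungs. -/
def Step (s t : RungState) : Prop :=
  s.degV ≠ s.degU ∧ t.degV ≠ t.degU ∧ ∃ vv uu vu uv : Bool,
    s.degV ≠ s.outV.toNat + vu.toNat + vv.toNat ∧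
    s.outV.toNat + vu.toNat + vv.toNat ≠ vv.toNat + uv.toNat + t.inV.toNat ∧
    vv.toNat + uv.toNat + t.inV.toNat ≠ t.degV ∧
    s.degU ≠ s.outU.toNat + uv.toNat + uu.toNat ∧
    s.outU.toNat + uv.toNat + uu.toNat ≠ uu.toNat + vu.toNat + t.inU.toNat ∧
    uu.toNat + vu.toNat + t.inU.toNat ≠ t.degU ∧
    s.outV.toNat + vu.toNat + vv.toNat ≠ uu.toNat + vu.toNat + t.inU.toNat ∧
    vv.toNat + uv.toNat + t.inV.toNat ≠ s.outU.toNat + uv.toNat + uu.toNat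

instance : DecidableRel Step := fun _ _ => by unfold Step; infer_instance

/- The transfer relation `Step` has three strongly connected components, each bipartite: `rank`
orders them and `side` is a bipartition of each. -/
def rank (s : RungState) : ℕ :=
  Int.natAbs (s.degV + s.degU - 2 * (s.outV.toNat + s.outU.toNat) - 1)

def side (s : RungState) : Bool := ((s.degV + s.degU) / 2).bodd

lemma Step.rank_le_and_side_ne : ∀ ⦃s t : RungState⦄, Step s t →
    rank t ≤ rank s ∧ (rank t = rank s → side t ≠ side s) := by
  rintro ⟨a₁, a₂, a₃, a₄, a₅⟩ ⟨b₁, b₂, b₃, b₄, b₅⟩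
  revert a₁ a₂ a₃ a₄ a₅ b₁ b₂ b₃ b₄ b₅
  decide

end RungState

def rungState (c : Sym2 (ZMod (3 * n) ⊕ ZMod (3 * n)) → Fin 2) (a : ZMod (3 * n)) : RungState where
  inV := c (vEdge a) = 0
  inU := c (uEdge a) = 0
  rung := c (crossEdge (a + 1)) = 0
  outV := c (vEdge (a + 1)) = 0
  outU := c (uEdge (a + 1)) = 0

lemma step_rungState {c : Sym2 (ZMod (3 * n) ⊕ ZMod (3 * n)) → Fin 2}
    (hc : ∀ i, LocallyIrregular ((XI n).colorClass c i)) {a : ZMod (3 * n)}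
    (ha : residue n a = 1) : (rungState c a).Step (rungState c (a + 1 + 1 + 1)) := by
  have hf {x y} (h : (XI n).Adj x y) := SimpleGraph.ncard_colorClass_zero_ne_of_adj hc
    finite_neighborSet ncard_neighborSet h
  have hv (b : ZMod (3 * n)) : (XI n).Adj (inl b) (inl (b + 1)) := adj_inl_inl.mpr (.inl rfl)
  have hu (b : ZMod (3 * n)) : (XI n).Adj (inr b) (inr (b + 1)) := adj_inr_inr.mpr (.inl rfl)
  have hx (b : ZMod (3 * n)) : (XI n).Adj (inl b) (inr (partner b)) := adj_inl_inr.mpr rfl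
  have p₁ : partner (a + 1) = a + 1 := partner_of_residue_eq_two (by simp [ha]; decide)
  have p₂ : partner (a + 1 + 1) = a + 1 + 1 + 1 :=
    partner_of_residue_eq_zero (by simp [ha]; decide)
  have p₃ : partner (a + 1 + 1 + 1) = a + 1 + 1 :=
    (partner_of_residue_eq_one (by simp [ha]; decide)).trans (add_sub_cancel_right _ _)
  have p₄ : partner (a + 1 + 1 + 1 + 1) = a + 1 + 1 + 1 + 1 :=
    partner_of_residue_eq_two (by simp [ha]; decide)
  have e₁ := hf (hv (a + 1))
  have e₂ := hf (hv (a + 1 + 1))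
  have e₃ := hf (hv (a + 1 + 1 + 1))
  have e₄ := hf (hu (a + 1))
  have e₅ := hf (hu (a + 1 + 1))
  have e₆ := hf (hu (a + 1 + 1 + 1))
  have e₇ := hf (hx (a + 1 + 1))
  have e₈ := hf (hx (a + 1 + 1 + 1))
  have e₉ := hf (hx (a + 1))
  have e₁₀ := hf (hx (a + 1 + 1 + 1 + 1))
  simp only [ncard_colorClass_neighborSet_inl, ncard_colorClass_neighborSet_inr, p₁, p₂, p₃, p₄,
    add_sub_cancel_right] at e₁ e₂ e₃ e₄ e₅ e₆ e₇ e₈ e₉ e₁₀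
  exact ⟨e₉, e₁₀, _, _, _, _, e₁, e₂, e₃, e₄, e₅, e₆, e₇, e₈⟩

theorem not_hasLIEC_two (hn : Odd n) : ¬ HasLIEC (XI n) 2 := by
  rintro ⟨c, hc⟩
  let a (j : ℕ) : ZMod (3 * n) := 3 * j + 1
  have ha (j : ℕ) : residue n (a j) = 1 := by
    rw [map_add, residue_three_mul, map_one, zero_add]
  have ha_succ (j : ℕ) : a (j + 1) = a j + 1 + 1 + 1 := by
    simp only [a]; push_cast; ring
  have ha_periodic : a n = a 0 := by
    simp only [a, ← Nat.cast_ofNat (R := ZMod (3 * n)), ← Nat.cast_mul, ZMod.natCast_self]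
    simp
  refine (Nat.not_even_iff_odd.mpr hn) (even_of_periodic_of_potential RungState.rank
    RungState.side RungState.Step.rank_le_and_side_ne (s := fun j => rungState c (a j)) (fun j => ?_)
    (congrArg (rungState c) ha_periodic))
  rw [ha_succ]
  exact step_rungState hc (ha j)

end XI

theorem XI_odd_LIEC_general (k : ℕ) :
    HasLIEC (XI (2 * k + 1)) 3 ∧ ¬ HasLIEC (XI (2 * k + 1)) 2 :=
  ⟨XI.hasLIEC_three _, XI.not_hasLIEC_two (odd_two_mul_add_one k)⟩

/-- For every positive integer `k`, the graph `XI (2k+1)` has locally irregular chromatic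
index exactly 3. -/
theorem XI_odd_LIEC (k : ℕ) (hk : 1 ≤ k) :
    HasLIEC (XI (2 * k + 1)) 3 ∧ ¬ HasLIEC (XI (2 * k + 1)) 2 :=
  XI_odd_LIEC_general k
end

section
/- Let k ≥ 2 and let G be the graph consisting of two adjacent vertices u and v joined, in addition to the edge uv, by k internally disjoint paths, where the i-th path has length 4t_i + 1 for some integer t_i ≥ 1. Then χ'_irr(G) = 3; in particular, G admits no locally irregular edge-coloring using at most 2 colors. -/
/-- The graph consisting of two adjacent vertices `u = Sum.inl true` and `v = Sum.inl false`
joined, in addition to the edge `uv`, by `k` internally disjoint paths, where the `i`-th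
path has `4 * t i` internal vertices, i.e. length `4 * t i + 1`. -/
def multiPathGraph (k : ℕ) (t : Fin k → ℕ) :
    SimpleGraph (Bool ⊕ (Σ i : Fin k, Fin (4 * t i))) :=
  SimpleGraph.fromRel (fun x y =>
    match x, y with
    | Sum.inl a, Sum.inl b => a ≠ b
    | Sum.inl true, Sum.inr ⟨_, j⟩ => (j : ℕ) = 0
    | Sum.inl false, Sum.inr ⟨i, j⟩ => (j : ℕ) = 4 * t i - 1
    | Sum.inr ⟨i, j⟩, Sum.inr ⟨i', j'⟩ => i = i' ∧ (j : ℕ) + 1 = (j' : ℕ)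
    | Sum.inr _, Sum.inl _ => False)

namespace SimpleGraph
open Set Function
variable {V α : Type*}

def edgeColorClass (G : SimpleGraph V) (col : Sym2 V → α) (a : α) : SimpleGraph V :=
  fromEdgeSet {e | e ∈ G.edgeSet ∧ col e = a}

noncomputable def edgeColorDegree (G : SimpleGraph V) (col : Sym2 V → α) (a : α) (x : V) :
    ℕ :=
  ((G.edgeColorClass col a).neighborSet x).ncard

def IsLIEC (G : SimpleGraph V) (col : Sym2 V → α) : Prop :=
  ∀ a, LocallyIrregular (G.edgeColorClass col a)

variable {G : SimpleGraph V} {col : Sym2 V → α} {a : α} {x y z : V}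

@[simp] lemma edgeColorClass_adj :
    (G.edgeColorClass col a).Adj x y ↔ G.Adj x y ∧ col s(x, y) = a := by
  simp only [edgeColorClass, fromEdgeSet_adj, mem_ofPred_eq, mem_edgeSet]
  exact ⟨fun h => h.1, fun h => ⟨h, h.1.ne⟩⟩

lemma neighborSet_edgeColorClass :
    (G.edgeColorClass col a).neighborSet x = {y ∈ G.neighborSet x | col s(x, y) = a} := by
  ext; simp

lemma edgeColorDegree_of_neighborSet_eq_pair [DecidableEq α] (h : G.neighborSet x = {y, z})
    (hyz : y ≠ z) :
    G.edgeColorDegree col a x =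
      (if col s(x, y) = a then 1 else 0) + (if col s(x, z) = a then 1 else 0) := by
  rw [edgeColorDegree, neighborSet_edgeColorClass, h]
  split_ifs with hy hz hz
  · convert ncard_pair hyz using 2; ext; aesop
  · convert ncard_singleton y using 2; ext; aesop
  · convert ncard_singleton z using 2; ext; aesop
  · convert ncard_empty V using 2; ext; aesop

lemma edgeColorDegree_of_neighborSet_eq_insert_range [DecidableEq α] {ι : Type*} [Finite ι]
    {f : ι → V} (hf : Injective f) (h : G.neighborSet x = insert y (range f))
    (hy : y ∉ range f) :
    G.edgeColorDegree col a x =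
      {i | col s(x, f i) = a}.ncard + if col s(x, y) = a then 1 else 0 := by
  rw [edgeColorDegree, neighborSet_edgeColorClass, h, ← ncard_image_of_injective _ hf]
  split_ifs with hxy
  · rw [← ncard_insert_of_notMem (fun h' => hy (image_subset_range _ _ h'))]
    congr 1; ext; aesop
  · congr 1; ext; aesop

lemma IsLIEC.edgeColorDegree_ne (hcol : G.IsLIEC col) (h : G.Adj x y) :
    G.edgeColorDegree col (col s(x, y)) x ≠ G.edgeColorDegree col (col s(x, y)) y :=
  hcol _ (edgeColorClass_adj.2 ⟨h, rfl⟩)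

lemma isLIEC_of_forall_adj
    (h : ∀ x y, G.Adj x y → ∃ a b, s(x, y) = s(a, b) ∧
      G.edgeColorDegree col (col s(a, b)) a ≠ G.edgeColorDegree col (col s(a, b)) b) :
    G.IsLIEC col := by
  intro c x y hxy
  obtain ⟨hadj, rfl⟩ := edgeColorClass_adj.1 hxy
  obtain ⟨a, b, hab, hne⟩ := h x y hadj
  rcases Sym2.eq_iff.1 hab with ⟨rfl, rfl⟩ | ⟨rfl, rfl⟩
  · exact hne
  · rw [Sym2.eq_swap]; exact hne.symm

lemma hasLIEC_iff_s19 {q : ℕ} : HasLIEC G q ↔ ∃ col : Sym2 V → Fin q, G.IsLIEC col :=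
  Iff.rfl

end SimpleGraph

namespace multiPathGraph
open SimpleGraph Sum Set
variable {k : ℕ} (t : Fin k → ℕ)

/-- Vertex `p` of the `i`-th path, from `u = inl true` at `p = 0` to `v = inl false` at
`p = 4 * t i + 1`. -/
def pathVertex (i : Fin k) : ℕ → Bool ⊕ (Σ i : Fin k, Fin (4 * t i))
  | 0 => inl true
  | p + 1 => if h : p < 4 * t i then inr ⟨i, ⟨p, h⟩⟩ else inl false

def pathEdge (i : Fin k) (m : ℕ) : Sym2 (Bool ⊕ (Σ i : Fin k, Fin (4 * t i))) :=
  s(pathVertex t i m, pathVertex t i (m + 1))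

variable {t} {i : Fin k} {p : ℕ}

@[simp] lemma adj_inl_inl {a b : Bool} : (multiPathGraph k t).Adj (inl a) (inl b) ↔ a ≠ b := by
  simp [multiPathGraph, ne_comm]

@[simp] lemma adj_true_inr {j : Fin (4 * t i)} :
    (multiPathGraph k t).Adj (inl true) (inr ⟨i, j⟩) ↔ (j : ℕ) = 0 := by
  simp [multiPathGraph]

@[simp] lemma adj_false_inr {j : Fin (4 * t i)} :
    (multiPathGraph k t).Adj (inl false) (inr ⟨i, j⟩) ↔ (j : ℕ) + 1 = 4 * t i := by
  simp [multiPathGraph]; omega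

@[simp] lemma adj_inr_inr {i' : Fin k} {j : Fin (4 * t i)} {j' : Fin (4 * t i')} :
    (multiPathGraph k t).Adj (inr ⟨i, j⟩) (inr ⟨i', j'⟩) ↔
      i = i' ∧ ((j : ℕ) + 1 = j' ∨ (j' : ℕ) + 1 = j) := by
  simp only [multiPathGraph, fromRel_adj, ne_eq, inr.injEq, Sigma.mk.inj_iff]
  constructor
  · rintro ⟨-, ⟨rfl, h⟩ | ⟨rfl, h⟩⟩ <;> simp [h]
  · rintro ⟨rfl, h⟩
    refine ⟨fun ⟨_, h'⟩ => ?_, by tauto⟩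
    rw [heq_eq_eq, Fin.ext_iff] at h'
    omega

@[simp] lemma pathVertex_zero : pathVertex t i 0 = inl true := rfl

lemma pathVertex_succ_of_lt (hp : p < 4 * t i) :
    pathVertex t i (p + 1) = inr ⟨i, ⟨p, hp⟩⟩ :=
  dif_pos hp

@[simp] lemma pathVertex_eq_true_iff : pathVertex t i p = inl true ↔ p = 0 := by
  cases p <;> simp only [pathVertex]; split_ifs <;> simp

@[simp] lemma pathVertex_eq_false_iff : pathVertex t i p = inl false ↔ 4 * t i < p := by
  cases p with
  | zero => simp
  | succ p => simp only [pathVertex]; split_ifs <;> simp <;> omega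

@[simp] lemma pathVertex_eq_inr_iff {i' : Fin k} {j : Fin (4 * t i')} :
    pathVertex t i p = inr ⟨i', j⟩ ↔ i = i' ∧ p = j + 1 := by
  cases p with
  | zero => simp
  | succ p =>
    simp only [pathVertex]
    split_ifs with h
    · simp only [inr.injEq, Sigma.mk.inj_iff]
      constructor
      · rintro ⟨rfl, h⟩; simp [Fin.ext_iff] at h; simp [h]
      · rintro ⟨rfl, h⟩; simp [Fin.ext_iff]; omega
    · simp only [false_iff, not_and]
      rintro rfl h'; omega

lemma neighborSet_true :
    (multiPathGraph k t).neighborSet (inl true) =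
      insert (inl false) (range (pathVertex t · 1)) := by
  ext (b | ⟨i, j⟩)
  · cases b <;> simp
  · simp [eq_comm]

lemma neighborSet_false :
    (multiPathGraph k t).neighborSet (inl false) =
      insert (inl true) (range fun i => pathVertex t i (4 * t i)) := by
  ext (b | ⟨i, j⟩)
  · cases b <;> simp
  · simp [eq_comm]

lemma neighborSet_pathVertex (hp : p < 4 * t i) :
    (multiPathGraph k t).neighborSet (pathVertex t i (p + 1)) =
      {pathVertex t i p, pathVertex t i (p + 2)} := by
  rw [pathVertex_succ_of_lt hp]
  ext (b | ⟨i', j⟩)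
  · rw [mem_neighborSet, adj_comm]
    cases b <;> simp [eq_comm]
    omega
  · simp [eq_comm]; omega

lemma mk_eq_or_exists_pathEdge_of_adj {x y} (h : (multiPathGraph k t).Adj x y) :
    s(x, y) = s(inl true, inl false) ∨ ∃ i, ∃ m ≤ 4 * t i, s(x, y) = pathEdge t i m := by
  rcases x with (_ | _) | ⟨i, j⟩
  · rw [← mem_neighborSet, neighborSet_false] at h
    obtain rfl | ⟨i, rfl⟩ := h
    · exact .inl Sym2.eq_swap
    · refine .inr ⟨i, 4 * t i, le_rfl, ?_⟩
      rw [pathEdge, Sym2.eq_swap, pathVertex_eq_false_iff.2 (Nat.lt_succ_self _)]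
  · rw [← mem_neighborSet, neighborSet_true] at h
    obtain rfl | ⟨i, rfl⟩ := h
    · exact .inl rfl
    · exact .inr ⟨i, 0, Nat.zero_le _, rfl⟩
  · rw [← pathVertex_succ_of_lt j.2, ← mem_neighborSet, neighborSet_pathVertex j.2] at h
    rw [← pathVertex_succ_of_lt j.2]
    obtain rfl | rfl := h
    · exact .inr ⟨i, j, j.2.le, Sym2.eq_swap⟩
    · exact .inr ⟨i, j + 1, j.2, rfl⟩

lemma pathVertex_four_mul (ht : 1 ≤ t i) :
    pathVertex t i (4 * t i) = inr ⟨i, ⟨4 * t i - 1, by omega⟩⟩ := by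
  simp; omega

lemma pathVertex_one_injective (ht : ∀ i, 1 ≤ t i) :
    Function.Injective (pathVertex t · 1) := by
  intro i i' (h : pathVertex t i 1 = pathVertex t i' 1)
  rw [show pathVertex t i 1 = inr ⟨i, ⟨0, Nat.mul_pos four_pos (ht i)⟩⟩ from
    pathVertex_succ_of_lt _] at h
  exact (pathVertex_eq_inr_iff.1 h.symm).1.symm

lemma pathVertex_four_mul_injective (ht : ∀ i, 1 ≤ t i) :
    Function.Injective fun i => pathVertex t i (4 * t i) := by
  intro i i' (h : pathVertex t i (4 * t i) = pathVertex t i' (4 * t i'))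
  rw [pathVertex_four_mul (ht i)] at h
  exact (pathVertex_eq_inr_iff.1 h.symm).1.symm

section Degrees

variable {α : Type*} [DecidableEq α] (col : Sym2 (Bool ⊕ (Σ i : Fin k, Fin (4 * t i))) → α)
  (a : α)

lemma edgeColorDegree_true (ht : ∀ i, 1 ≤ t i) :
    (multiPathGraph k t).edgeColorDegree col a (inl true) =
      {i | col (pathEdge t i 0) = a}.ncard + if col s(inl true, inl false) = a then 1 else 0 := by
  refine edgeColorDegree_of_neighborSet_eq_insert_range (pathVertex_one_injective ht)
    neighborSet_true ?_
  rintro ⟨i, h⟩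
  have := ht i
  simp at h
  omega

lemma edgeColorDegree_false (ht : ∀ i, 1 ≤ t i) :
    (multiPathGraph k t).edgeColorDegree col a (inl false) =
      {i | col (pathEdge t i (4 * t i)) = a}.ncard +
        if col s(inl true, inl false) = a then 1 else 0 := by
  have hlast (i) : pathVertex t i (4 * t i + 1) = inl false := by simp
  rw [edgeColorDegree_of_neighborSet_eq_insert_range (pathVertex_four_mul_injective ht)
    neighborSet_false (by rintro ⟨i, h⟩; simp at h; have := ht i; omega)]
  simp only [pathEdge, hlast, Sym2.eq_swap (b := inl false)]

lemma pathVertex_ne_pathVertex_add_two (hp : p < 4 * t i) :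
    pathVertex t i p ≠ pathVertex t i (p + 2) := by
  cases p with
  | zero => simp [eq_comm]
  | succ p => rw [pathVertex_succ_of_lt (by omega)]; exact fun h => by simpa using h.symm

lemma edgeColorDegree_pathVertex (hp : p < 4 * t i) :
    (multiPathGraph k t).edgeColorDegree col a (pathVertex t i (p + 1)) =
      (if col (pathEdge t i p) = a then 1 else 0) +
        if col (pathEdge t i (p + 1)) = a then 1 else 0 := by
  rw [edgeColorDegree_of_neighborSet_eq_pair (neighborSet_pathVertex hp)
    (pathVertex_ne_pathVertex_add_two hp), Sym2.eq_swap]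
  rfl

lemma edgeColorDegree_pathVertex_ne_iff {c : α} (hp : p + 1 < 4 * t i)
    (hc : col (pathEdge t i (p + 1)) = c) :
    (multiPathGraph k t).edgeColorDegree col c (pathVertex t i (p + 1)) ≠
        (multiPathGraph k t).edgeColorDegree col c (pathVertex t i (p + 2)) ↔
      (col (pathEdge t i p) = c ↔ col (pathEdge t i (p + 2)) ≠ c) := by
  rw [edgeColorDegree_pathVertex col c (by omega), edgeColorDegree_pathVertex col c hp, hc]
  by_cases h₁ : col (pathEdge t i p) = c <;> by_cases h₂ : col (pathEdge t i (p + 2)) = c <;>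
    simp [h₁, h₂]

variable {col} in
lemma pathEdge_eq_iff_ne (hcol : (multiPathGraph k t).IsLIEC col) (hp : p + 1 < 4 * t i) :
    col (pathEdge t i p) = col (pathEdge t i (p + 1)) ↔
      col (pathEdge t i (p + 2)) ≠ col (pathEdge t i (p + 1)) := by
  refine (edgeColorDegree_pathVertex_ne_iff col hp rfl).1 (hcol.edgeColorDegree_ne ?_)
  rw [← mem_neighborSet, neighborSet_pathVertex (by omega)]
  exact mem_insert_of_mem _ rfl

end Degrees

section TwoColors

variable {col : Sym2 (Bool ⊕ (Σ i : Fin k, Fin (4 * t i))) → Fin 2}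

lemma pathEdge_add_four (hcol : (multiPathGraph k t).IsLIEC col) {m : ℕ}
    (hm : m + 4 ≤ 4 * t i) : col (pathEdge t i (m + 4)) = col (pathEdge t i m) :=
  have period : ∀ a b c d e : Fin 2,
      (a = b ↔ c ≠ b) → (b = c ↔ d ≠ c) → (c = d ↔ e ≠ d) → e = a := by decide
  period _ _ _ _ _ (pathEdge_eq_iff_ne hcol (by omega)) (pathEdge_eq_iff_ne hcol (by omega))
    (pathEdge_eq_iff_ne hcol (by omega))

lemma pathEdge_four_mul (hcol : (multiPathGraph k t).IsLIEC col) (i : Fin k) :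
    col (pathEdge t i (4 * t i)) = col (pathEdge t i 0) := by
  suffices ∀ n ≤ t i, col (pathEdge t i (4 * n)) = col (pathEdge t i 0) from this _ le_rfl
  intro n hn
  induction n with
  | zero => rfl
  | succ n ih => rw [Nat.mul_succ, pathEdge_add_four hcol (by omega), ih (by omega)]

theorem not_hasLIEC_two (ht : ∀ i, 1 ≤ t i) : ¬ HasLIEC (multiPathGraph k t) 2 := by
  rw [hasLIEC_iff_s19]
  rintro ⟨col, hcol⟩
  apply hcol.edgeColorDegree_ne (show (multiPathGraph k t).Adj (inl true) (inl false) by simp)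
  rw [edgeColorDegree_true col _ ht, edgeColorDegree_false col _ ht]
  simp only [pathEdge_four_mul hcol]

end TwoColors

section ThreeColoring

variable (t)

def pathColor (m : ℕ) : Fin 3 := if m ≤ 1 then 0 else if m % 4 ≤ 1 then 2 else 1

def pathIndex : Bool ⊕ (Σ i : Fin k, Fin (4 * t i)) → ℕ
  | inl _ => 0
  | inr x => x.2 + 1

def threeColoring (e : Sym2 (Bool ⊕ (Σ i : Fin k, Fin (4 * t i)))) : Fin 3 :=
  if inl true ∈ e then 0 else if inl false ∈ e then 2 else pathColor (e.map (pathIndex t)).inf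

variable {t}

lemma pathColor_eq_iff_ne (m : ℕ) :
    pathColor m = pathColor (m + 1) ↔ pathColor (m + 2) ≠ pathColor (m + 1) := by
  unfold pathColor
  split_ifs <;> simp_all <;> omega

lemma pathColor_four_mul {n : ℕ} (hn : 1 ≤ n) : pathColor (4 * n) = 2 := by
  unfold pathColor; split_ifs <;> first | rfl | omega

lemma pathColor_four_mul_sub_one {n : ℕ} (hn : 1 ≤ n) : pathColor (4 * n - 1) = 1 := by
  unfold pathColor; split_ifs <;> first | rfl | omega

lemma threeColoring_true_false : threeColoring t s(inl true, inl false) = 0 := by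
  simp [threeColoring]

lemma threeColoring_pathEdge (ht : 1 ≤ t i) {m : ℕ} (hm : m ≤ 4 * t i) :
    threeColoring t (pathEdge t i m) = pathColor m := by
  rcases Nat.eq_zero_or_pos m with rfl | hm0
  · simp [threeColoring, pathEdge, pathColor]
  rcases hm.eq_or_lt with rfl | hlt
  · simp [threeColoring, pathEdge, pathColor_four_mul ht, @eq_comm _ (inl _)]
    omega
  obtain ⟨p, rfl⟩ := Nat.exists_eq_add_of_lt hm0
  rw [pathEdge, pathVertex_succ_of_lt (by omega), pathVertex_succ_of_lt (by omega)]
  simp [threeColoring, pathIndex]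

lemma edgeColorDegree_threeColoring_true (ht : ∀ i, 1 ≤ t i) :
    (multiPathGraph k t).edgeColorDegree (threeColoring t) 0 (inl true) = k + 1 := by
  rw [edgeColorDegree_true _ _ ht, threeColoring_true_false]
  simp [threeColoring_pathEdge (ht _), pathColor]

lemma edgeColorDegree_threeColoring_false_zero (ht : ∀ i, 1 ≤ t i) :
    (multiPathGraph k t).edgeColorDegree (threeColoring t) 0 (inl false) = 1 := by
  rw [edgeColorDegree_false _ _ ht, threeColoring_true_false]
  simp [threeColoring_pathEdge (ht _), pathColor_four_mul (ht _)]

lemma edgeColorDegree_threeColoring_false_two (ht : ∀ i, 1 ≤ t i) :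
    (multiPathGraph k t).edgeColorDegree (threeColoring t) 2 (inl false) = k := by
  rw [edgeColorDegree_false _ _ ht, threeColoring_true_false]
  simp [threeColoring_pathEdge (ht _), pathColor_four_mul (ht _)]

lemma edgeColorDegree_threeColoring_ne (hk : 2 ≤ k) (ht : ∀ i, 1 ≤ t i) {m : ℕ}
    (hm : m ≤ 4 * t i) :
    (multiPathGraph k t).edgeColorDegree (threeColoring t) (pathColor m) (pathVertex t i m) ≠
      (multiPathGraph k t).edgeColorDegree (threeColoring t) (pathColor m)
        (pathVertex t i (m + 1)) := by
  have hcol {m} (hm : m ≤ 4 * t i) := threeColoring_pathEdge (ht i) hm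
  have h4 : 4 ≤ 4 * t i := by have := ht i; omega
  rcases m with _ | p
  · rw [show pathColor 0 = 0 from rfl, pathVertex_zero, edgeColorDegree_threeColoring_true ht,
      edgeColorDegree_pathVertex _ _ (by omega), hcol hm,
      hcol (by omega : 0 + 1 ≤ 4 * t i)]
    simp [pathColor]
    omega
  rcases hm.eq_or_lt with hp | hp
  · rw [pathVertex_eq_false_iff.2 (by omega : 4 * t i < p + 1 + 1),
      edgeColorDegree_pathVertex _ _ (by omega : p < 4 * t i), hcol (by omega), hcol hm, hp,
      pathColor_four_mul (ht i), edgeColorDegree_threeColoring_false_two ht,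
      show p = 4 * t i - 1 by omega, pathColor_four_mul_sub_one (ht i)]
    simp
    omega
  · refine (edgeColorDegree_pathVertex_ne_iff _ hp (hcol hm)).2 ?_
    rw [hcol (by omega), hcol (by omega)]
    exact pathColor_eq_iff_ne p

theorem isLIEC_threeColoring (hk : 2 ≤ k) (ht : ∀ i, 1 ≤ t i) :
    (multiPathGraph k t).IsLIEC (threeColoring t) := by
  refine isLIEC_of_forall_adj fun x y hadj => ?_
  obtain h | ⟨i, m, hm, h⟩ := mk_eq_or_exists_pathEdge_of_adj hadj
  · refine ⟨_, _, h, ?_⟩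
    rw [threeColoring_true_false, edgeColorDegree_threeColoring_true ht,
      edgeColorDegree_threeColoring_false_zero ht]
    omega
  · refine ⟨_, _, h, ?_⟩
    rw [show s(pathVertex t i m, pathVertex t i (m + 1)) = pathEdge t i m from rfl,
      threeColoring_pathEdge (ht i) hm]
    exact edgeColorDegree_threeColoring_ne hk ht hm

end ThreeColoring

end multiPathGraph

/-- For `k ≥ 2`, the graph consisting of two adjacent vertices `u, v` joined, in addition
to the edge `uv`, by `k` internally disjoint paths of lengths `4 t_i + 1` (with `t_i ≥ 1`)
has locally irregular chromatic index exactly 3; in particular it admits no locally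
irregular edge-coloring with at most 2 colors. -/
theorem multiPathGraph_LIEC (k : ℕ) (hk : 2 ≤ k) (t : Fin k → ℕ) (ht : ∀ i, 1 ≤ t i) :
    HasLIEC (multiPathGraph k t) 3 ∧ ¬ HasLIEC (multiPathGraph k t) 2 :=
  ⟨SimpleGraph.hasLIEC_iff_s19.2 ⟨_, multiPathGraph.isLIEC_threeColoring hk ht⟩,
    multiPathGraph.not_hasLIEC_two ht⟩
end
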